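/- arXiv:2005.11944 — 6 statements merged into one kernel-verified Lean document; each statement's English description precedes it below -/
import Mathlib

section
/- Let a, c, d, β, τ > 0 with a > d. Then the equation a - d - cF = (a - cF)e^{-βτF} has at most two solutions F in (0, ∞), and every positive solution satisfies F < a/c. -/
open Real Set

theorem stmt5 (a c d β τ : ℝ) (ha : 0 < a) (hc : 0 < c) (hd : 0 < d)
    (hβ : 0 < β) (hτ : 0 < τ) (had : a > d) :
    let S : Set ℝ := {F | 0 < F ∧ a - d - c * F = (a - c * F) * Real.exp (-(β * τ * F))}
    S.Finite ∧ S.ncard ≤ 2 ∧ ∀ F ∈ S, F < a / c := by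
  intro S
  set k := β * τ with hk
  have hk0 : 0 < k := mul_pos hβ hτ
  -- every solution is below a/c
  have hlt : ∀ F ∈ S, F < a / c := by
    rintro F ⟨hF, heq⟩
    by_contra h
    push_neg at h
    have hac : a - c * F ≤ 0 := by
      have := (div_le_iff₀ hc).mp h
      nlinarith
    have he1 : Real.exp (-(k * F)) < 1 := by
      rw [Real.exp_lt_one_iff]
      nlinarith
    nlinarith [mul_nonneg (neg_nonneg.mpr hac) (sub_nonneg.mpr he1.le)]
  -- the difference function
  set f : ℝ → ℝ := fun x => a - d - c * x - (a - c * x) * Real.exp (-(k * x)) with hfdef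
  set f' : ℝ → ℝ := fun x => -c + Real.exp (-(k * x)) * (c + k * (a - c * x)) with hf'def
  have hlin : ∀ x : ℝ, HasDerivAt (fun x : ℝ => -(k * x)) (-k) x := by
    intro x; have := ((hasDerivAt_id' x).const_mul k).neg; rwa [mul_one] at this
  have hexp : ∀ x : ℝ, HasDerivAt (fun x : ℝ => Real.exp (-(k * x)))
      (Real.exp (-(k * x)) * (-k)) x := fun x => (hlin x).exp
  have hd1 : ∀ x : ℝ, HasDerivAt f (f' x) x := by
    intro x
    have h1 : HasDerivAt (fun x : ℝ => a - c * x) (-c) x := by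
      simpa using ((hasDerivAt_id x).const_mul c).const_sub a
    have h2 : HasDerivAt (fun x : ℝ => a - d - c * x) (-c) x := by
      simpa using ((hasDerivAt_id x).const_mul c).const_sub (a - d)
    have h3 := h2.sub (h1.mul (hexp x))
    exact h3.congr_deriv (by simp only [hf'def]; ring)
  have hd2 : ∀ x : ℝ, HasDerivAt f'
      (-(k * Real.exp (-(k * x)) * (2 * c + k * (a - c * x)))) x := by
    intro x
    have h1 : HasDerivAt (fun x : ℝ => c + k * (a - c * x)) (-(k * c)) x := by
      have : HasDerivAt (fun x : ℝ => a - c * x) (-c) x := by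
        simpa using ((hasDerivAt_id x).const_mul c).const_sub a
      simpa using (this.const_mul k).const_add c
    have h2 := ((hexp x).mul h1).const_add (-c)
    exact h2.congr_deriv (by ring)
  have hderiv1 : deriv f = f' := funext fun x => (hd1 x).deriv
  have hconc : StrictConcaveOn ℝ (Set.Icc 0 (a / c)) f := by
    apply strictConcaveOn_of_deriv2_neg (convex_Icc _ _)
    · exact fun x _ => ((hd1 x).differentiableAt).continuousAt.continuousWithinAt
    · intro x hx
      rw [interior_Icc] at hx
      have h2 : deriv (deriv f) x = -(k * Real.exp (-(k * x)) * (2 * c + k * (a - c * x))) := by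
        rw [hderiv1]; exact (hd2 x).deriv
      simp only [Function.iterate_succ, Function.iterate_zero, Function.comp_apply, id]
      rw [h2]
      have hx2 : 0 < a - c * x := by
        have := hx.2
        rw [lt_div_iff₀ hc] at this
        nlinarith
      have he := Real.exp_pos (-(k * x))
      have h3 : 0 < 2 * c + k * (a - c * x) := by nlinarith
      nlinarith [mul_pos (mul_pos hk0 he) h3]
  -- solutions are zeros of f in Icc 0 (a/c)
  have hmemIcc : ∀ F ∈ S, F ∈ Set.Icc 0 (a / c) := fun F hF =>
    ⟨hF.1.le, (hlt F hF).le⟩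
  have hzero : ∀ F ∈ S, f F = 0 := by
    rintro F ⟨hF, heq⟩
    simp only [hfdef]
    linarith
  -- no three ordered solutions
  have key : ∀ x ∈ S, ∀ y ∈ S, ∀ z ∈ S, x < y → y < z → False := by
    intro x hx y hy z hz hxy hyz
    have hxz : x < z := hxy.trans hyz
    set t := (z - y) / (z - x) with ht
    set s := (y - x) / (z - x) with hs
    have hzx : 0 < z - x := by linarith
    have ht0 : 0 < t := div_pos (by linarith) hzx
    have hs0 : 0 < s := div_pos (by linarith) hzx
    have hts : t + s = 1 := by rw [ht, hs]; field_simp; ring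
    have hcomb : t • x + s • z = y := by
      simp only [smul_eq_mul, ht, hs]
      field_simp
      ring
    have := hconc.2 (hmemIcc x hx) (hmemIcc z hz) (ne_of_lt hxz) ht0 hs0 hts
    rw [hcomb, hzero x hx, hzero z hz, hzero y hy] at this
    simp at this
  -- conclude
  by_cases hS : S = ∅
  · simp [hS]
  · obtain ⟨x, hx⟩ := Set.nonempty_iff_ne_empty.mpr hS
    by_cases h2 : ∃ y ∈ S, y ≠ x
    · obtain ⟨y, hy, hyx⟩ := h2
      have hsub : S ⊆ {x, y} := by
        intro z hz
        by_contra hzc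
        simp only [Set.mem_insert_iff, Set.mem_singleton_iff] at hzc
        push_neg at hzc
        obtain ⟨hzx, hzy⟩ := hzc
        -- x, y, z are pairwise distinct; order them
        rcases lt_trichotomy x y with h1 | h1 | h1
        · rcases lt_trichotomy z x with h3 | h3 | h3
          · exact key z hz x hx y hy h3 h1
          · exact hzx h3
          · rcases lt_trichotomy z y with h4 | h4 | h4
            · exact key x hx z hz y hy h3 h4
            · exact hzy h4
            · exact key x hx y hy z hz h1 h4
        · exact hyx h1.symm
        · rcases lt_trichotomy z y with h3 | h3 | h3
          · exact key z hz y hy x hx h3 h1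
          · exact hzy h3
          · rcases lt_trichotomy z x with h4 | h4 | h4
            · exact key y hy z hz x hx h3 h4
            · exact hzx h4
            · exact key y hy x hx z hz h1 h4
      have hfin : S.Finite := Set.Finite.subset (((Set.finite_singleton y).insert x)) hsub
      refine ⟨hfin, ?_, hlt⟩
      calc S.ncard ≤ ({x, y} : Set ℝ).ncard :=
            Set.ncard_le_ncard hsub (((Set.finite_singleton y).insert x))
        _ ≤ 2 := by
            have := Set.ncard_insert_le x ({y} : Set ℝ)
            simpa using this
    · push_neg at h2
      have hsub : S ⊆ {x} := fun z hz => h2 z hz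
      have hfin : S.Finite := Set.Finite.subset (Set.finite_singleton x) hsub
      refine ⟨hfin, ?_, hlt⟩
      calc S.ncard ≤ ({x} : Set ℝ).ncard := Set.ncard_le_ncard hsub (Set.finite_singleton x)
        _ ≤ 2 := by simp
end

section
/- Let b, K, r, νE, μE, μF, β, τ > 0 with b·r·νE > μF(νE + μE). Define g0(F) = F·[b(K·r·νE − μF·F)(1 − e^{−βτF}) − K·μF(μE+νE)] / [bF(1 − e^{−βτF}) + K(μE+νE)]. Then g0 has at most two roots in (0, ∞), and all such roots lie in (0, K·r·νE/μF). -/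
theorem stmt6 (b K r νE μE μF β τ : ℝ)
    (hb : 0 < b) (hK : 0 < K) (hr : 0 < r) (hνE : 0 < νE) (hμE : 0 < μE)
    (hμF : 0 < μF) (hβ : 0 < β) (hτ : 0 < τ)
    (hcond : b * r * νE > μF * (νE + μE))
    (g0 : ℝ → ℝ)
    (hg0 : ∀ F, g0 F = F * (b * (K * r * νE - μF * F) * (1 - Real.exp (-(β * τ * F)))
      - K * μF * (μE + νE)) / (b * F * (1 - Real.exp (-(β * τ * F))) + K * (μE + νE))) :
    let S : Set ℝ := {F | 0 < F ∧ g0 F = 0}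
    S.Finite ∧ S.ncard ≤ 2 ∧ ∀ F ∈ S, F < K * r * νE / μF := by
  intro S
  set M : ℝ := K * r * νE / μF with hM
  set f : ℝ → ℝ := fun F => b * (K * r * νE - μF * F) * (1 - Real.exp (-(β * τ * F)))
      - K * μF * (μE + νE) with hf
  -- every element of S is a root of f in (0, M)
  have hroot : ∀ F ∈ S, f F = 0 ∧ 0 < F ∧ F < M := by
    rintro F ⟨hF, hg⟩
    have hexp : Real.exp (-(β * τ * F)) < 1 := by
      rw [Real.exp_lt_one_iff]
      nlinarith [mul_pos (mul_pos hβ hτ) hF]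
    have hD : 0 < b * F * (1 - Real.exp (-(β * τ * F))) + K * (μE + νE) := by
      have h1 : 0 < b * F * (1 - Real.exp (-(β * τ * F))) :=
        mul_pos (mul_pos hb hF) (by linarith)
      nlinarith
    rw [hg0 F, div_eq_zero_iff] at hg
    rcases hg with hg | hg
    · rcases mul_eq_zero.1 hg with h | h
      · exact absurd h (ne_of_gt hF)
      · refine ⟨h, hF, ?_⟩
        have hC : (0:ℝ) < K * μF * (μE + νE) := by positivity
        have hA : 0 < K * r * νE - μF * F := by
          by_contra hA
          push_neg at hA
          have hpos : 0 < 1 - Real.exp (-(β * τ * F)) := by linarith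
          nlinarith [mul_nonneg (mul_nonneg hb.le (neg_nonneg.2 hA)) hpos.le]
        rw [hM, lt_div_iff₀ hμF]
        linarith
    · exact absurd hg (ne_of_gt hD)
  -- derivative computations
  set c : ℝ := β * τ with hc
  have hcpos : 0 < c := by positivity
  set f1 : ℝ → ℝ := fun F => b * (-μF * (1 - Real.exp (-(c * F)))
      + (K * r * νE - μF * F) * (c * Real.exp (-(c * F)))) with hf1
  set f2 : ℝ → ℝ := fun F => b * Real.exp (-(c * F)) *
      (-(2 * μF * c) - c ^ 2 * (K * r * νE - μF * F)) with hf2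
  have hde : ∀ x : ℝ, HasDerivAt (fun F => Real.exp (-(c * F)))
      (Real.exp (-(c * x)) * (-c)) x := by
    intro x
    have h1 : HasDerivAt (fun F : ℝ => -(c * F)) (-c) x := by
      exact (((hasDerivAt_id x).const_mul c).neg).congr_deriv (by ring)
    exact h1.exp
  have hd1 : ∀ x : ℝ, HasDerivAt f (f1 x) x := by
    intro x
    have h1 : HasDerivAt (fun F : ℝ => K * r * νE - μF * F) (-μF) x := by
      exact ((hasDerivAt_const x (K * r * νE)).sub ((hasDerivAt_id x).const_mul μF)).congr_deriv (by ring)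
    have h2 : HasDerivAt (fun F : ℝ => 1 - Real.exp (-(c * F)))
        (0 - Real.exp (-(c * x)) * (-c)) x := (hasDerivAt_const x 1).sub (hde x)
    have h3 := ((h1.mul h2).const_mul b).sub_const (K * μF * (μE + νE))
    refine (h3.congr_deriv ?_).congr_of_eventuallyEq (Filter.Eventually.of_forall fun F => ?_)
    · simp only [hf1]
      ring
    · simp only [hf, Pi.mul_apply]
      ring
  have hd2 : ∀ x : ℝ, HasDerivAt f1 (f2 x) x := by
    intro x
    have h1 : HasDerivAt (fun F : ℝ => K * r * νE - μF * F) (-μF) x := by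
      exact ((hasDerivAt_const x (K * r * νE)).sub ((hasDerivAt_id x).const_mul μF)).congr_deriv (by ring)
    have h2 : HasDerivAt (fun F : ℝ => 1 - Real.exp (-(c * F)))
        (0 - Real.exp (-(c * x)) * (-c)) x := (hasDerivAt_const x 1).sub (hde x)
    have h3 : HasDerivAt (fun F : ℝ => -μF * (1 - Real.exp (-(c * F))))
        (-μF * (0 - Real.exp (-(c * x)) * (-c))) x := h2.const_mul (-μF)
    have h4 : HasDerivAt (fun F : ℝ => c * Real.exp (-(c * F)))
        (c * (Real.exp (-(c * x)) * (-c))) x := (hde x).const_mul c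
    have h5 := ((h3.add (h1.mul h4)).const_mul b)
    exact h5.congr_deriv (by simp only [hf2]; ring)
  have hderiv_f : deriv f = f1 := funext fun x => (hd1 x).deriv
  -- strict concavity on Icc 0 M
  have hcont : Continuous f := by
    simp only [hf]
    fun_prop
  have hconc : StrictConcaveOn ℝ (Set.Icc 0 M) f := by
    apply strictConcaveOn_of_deriv2_neg (convex_Icc 0 M) hcont.continuousOn
    intro x hx
    rw [interior_Icc] at hx
    have hA : 0 < K * r * νE - μF * x := by
      have := hx.2
      rw [hM, lt_div_iff₀ hμF] at this
      linarith
    have hderiv2 : deriv^[2] f x = f2 x := by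
      simp only [Function.iterate_succ, Function.iterate_zero, Function.comp_apply, id,
        hderiv_f]
      exact (hd2 x).deriv
    rw [hderiv2]
    have hepos : 0 < Real.exp (-(c * x)) := Real.exp_pos _
    simp only [hf2]
    have : -(2 * μF * c) - c ^ 2 * (K * r * νE - μF * x) < 0 := by nlinarith
    exact mul_neg_of_pos_of_neg (by positivity) this
  -- no three distinct roots
  have key : ∀ x y z : ℝ, x ∈ S → y ∈ S → z ∈ S → x < y → y < z → False := by
    intro x y z hx hy hz hxy hyz
    obtain ⟨hfx, hx0, hxM⟩ := hroot x hx
    obtain ⟨hfy, hy0, hyM⟩ := hroot y hy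
    obtain ⟨hfz, hz0, hzM⟩ := hroot z hz
    have hxmem : x ∈ Set.Icc 0 M := ⟨hx0.le, hxM.le⟩
    have hzmem : z ∈ Set.Icc 0 M := ⟨hz0.le, hzM.le⟩
    have hxz : x < z := hxy.trans hyz
    have hyseg : y ∈ openSegment ℝ x z := by
      rw [openSegment_eq_Ioo hxz]
      exact ⟨hxy, hyz⟩
    have := hconc.lt_on_openSegment hxmem hzmem (ne_of_lt hxz) hyseg
    rw [hfx, hfz, hfy] at this
    simp at this
  have key3 : ∀ x y z : ℝ, x ∈ S → y ∈ S → z ∈ S → x ≠ y → x ≠ z → y ≠ z → False := by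
    intro x y z hx hy hz hxy hxz hyz
    rcases lt_trichotomy x y with h1 | h1 | h1
    · rcases lt_trichotomy y z with h2 | h2 | h2
      · exact key x y z hx hy hz h1 h2
      · exact hyz h2
      · rcases lt_trichotomy x z with h3 | h3 | h3
        · exact key x z y hx hz hy h3 h2
        · exact hxz h3
        · exact key z x y hz hx hy h3 h1
    · exact hxy h1
    · rcases lt_trichotomy x z with h2 | h2 | h2
      · exact key y x z hy hx hz h1 h2
      · exact hxz h2
      · rcases lt_trichotomy y z with h3 | h3 | h3
        · exact key y z x hy hz hx h3 h2
        · exact hyz h3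
        · exact key z y x hz hy hx h3 h1
  have hbound : ∀ F ∈ S, F < K * r * νE / μF := fun F hF => (hroot F hF).2.2
  by_cases hsub : ∀ x ∈ S, ∀ y ∈ S, x = y
  · have hss : S.Subsingleton := fun x hx y hy => hsub x hx y hy
    refine ⟨hss.finite, ?_, hbound⟩
    rcases hss.eq_empty_or_singleton with h | ⟨a, h⟩ <;> simp [h]
  · push_neg at hsub
    obtain ⟨a, ha, b', hb', hab⟩ := hsub
    have hsubset : S ⊆ {a, b'} := by
      intro z hz
      by_contra h
      simp only [Set.mem_insert_iff, Set.mem_singleton_iff, not_or] at h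
      exact key3 a b' z ha hb' hz hab (Ne.symm h.1) (Ne.symm h.2)
    have hfin : S.Finite := (Set.toFinite {a, b'}).subset hsubset
    refine ⟨hfin, ?_, hbound⟩
    calc S.ncard ≤ ({a, b'} : Set ℝ).ncard :=
          Set.ncard_le_ncard hsubset (Set.toFinite _)
      _ ≤ 2 := (Set.ncard_insert_le a {b'}).trans (by simp)
end

section
/- Let b, K, r, νE, μE, μF, β, τ, γ > 0 with b·r·νE > μF(νE+μE). If Ms > τK(b·r·νE − μF(νE+μE))²/(4bμF²(νE+μE)γ), then for all F > 0: bτF(K·r·νE − μF·F)(1 − e^{−β(τF+γMs)}) − KμF(νE+μE)(τF + γMs) < 0. -/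
theorem stmt9 (b K r νE μE μF β τ γ Ms : ℝ)
    (hb : 0 < b) (hK : 0 < K) (hr : 0 < r) (hνE : 0 < νE) (hμE : 0 < μE)
    (hμF : 0 < μF) (hβ : 0 < β) (hτ : 0 < τ) (hγ : 0 < γ)
    (hcond : b * r * νE > μF * (νE + μE))
    (hMs : Ms > τ * K * (b * r * νE - μF * (νE + μE)) ^ 2 / (4 * b * μF ^ 2 * (νE + μE) * γ)) :
    ∀ F : ℝ, 0 < F →
      b * τ * F * (K * r * νE - μF * F) * (1 - Real.exp (-(β * (τ * F + γ * Ms))))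
        - K * μF * (νE + μE) * (τ * F + γ * Ms) < 0 := by
  intro F hF
  have hA0 : 0 < b * r * νE - μF * (νE + μE) := by linarith
  have hMs0 : 0 < Ms := lt_of_le_of_lt (by positivity) hMs
  have hden : 0 < 4 * b * μF ^ 2 * (νE + μE) * γ := by positivity
  have hkey : τ * K * (b * r * νE - μF * (νE + μE)) ^ 2
      < Ms * (4 * b * μF ^ 2 * (νE + μE) * γ) := by
    rw [gt_iff_lt, div_lt_iff₀ hden] at hMs; linarith
  have hx : 0 < β * (τ * F + γ * Ms) := by positivity
  have hE1 : Real.exp (-(β * (τ * F + γ * Ms))) < 1 := by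
    rw [Real.exp_lt_one_iff]; linarith
  have hE0 : Real.exp (-(β * (τ * F + γ * Ms))) > 0 := Real.exp_pos _
  set E := 1 - Real.exp (-(β * (τ * F + γ * Ms))) with hEdef
  have hE0' : 0 < E := by simp [hEdef]; linarith
  have hE1' : E < 1 := by simp [hEdef]; linarith
  rcases le_or_gt (K * r * νE - μF * F) 0 with h | h
  · have h1 : b * τ * F * (K * r * νE - μF * F) * E ≤ 0 := by
      apply mul_nonpos_of_nonpos_of_nonneg
      · exact mul_nonpos_of_nonneg_of_nonpos (by positivity) h
      · linarith
    have h2 : 0 < K * μF * (νE + μE) * (τ * F + γ * Ms) := by positivity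
    linarith
  · have hP : 0 < b * τ * F * (K * r * νE - μF * F) :=
      mul_pos (by positivity) h
    have h1 : b * τ * F * (K * r * νE - μF * F) * E
        ≤ b * τ * F * (K * r * νE - μF * F) := by
      calc b * τ * F * (K * r * νE - μF * F) * E
          ≤ b * τ * F * (K * r * νE - μF * F) * 1 :=
            mul_le_mul_of_nonneg_left hE1'.le hP.le
        _ = b * τ * F * (K * r * νE - μF * F) := mul_one _
    have h2 : b * τ * F * (K * r * νE - μF * F)
        - K * μF * (νE + μE) * (τ * F + γ * Ms) < 0 := by
      nlinarith [mul_nonneg hτ.le (sq_nonneg (2 * b * μF * F - K * (b * r * νE - μF * (νE + μE)))),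
        hkey, mul_pos hb hμF, mul_pos hK hμF, hF.le, hτ.le]
    linarith
end

section
/- Let b, K, r, νE, μE, μF, β, τ > 0 with b·r·νE ≤ μF(νE+μE). Then g(F, 0) = F·[b(K·r·νE − μF·F)(1 − e^{−βτF}) − KμF(μE+νE)] / [bF(1 − e^{−βτF}) + K(μE+νE)] is negative for all F > 0. -/
theorem stmt10 (b K r νE μE μF β τ : ℝ)
    (hb : 0 < b) (hK : 0 < K) (hr : 0 < r) (hνE : 0 < νE) (hμE : 0 < μE)
    (hμF : 0 < μF) (hβ : 0 < β) (hτ : 0 < τ)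
    (hcond : b * r * νE ≤ μF * (νE + μE)) :
    ∀ F : ℝ, 0 < F →
      F * (b * (K * r * νE - μF * F) * (1 - Real.exp (-(β * τ * F))) - K * μF * (μE + νE)) /
        (b * F * (1 - Real.exp (-(β * τ * F))) + K * (μE + νE)) < 0 := by
  intro F hF
  set E := 1 - Real.exp (-(β * τ * F)) with hE
  have hEpos : 0 < E := by
    have : Real.exp (-(β * τ * F)) < 1 := by
      rw [Real.exp_lt_one_iff]; exact neg_neg_iff_pos.mpr (by positivity)
    linarith
  have hE1 : E < 1 := by
    have : 0 < Real.exp (-(β * τ * F)) := Real.exp_pos _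
    linarith
  have hden : 0 < b * F * E + K * (μE + νE) := by positivity
  have hnum : b * (K * r * νE - μF * F) * E - K * μF * (μE + νE) < 0 := by
    nlinarith [mul_pos (mul_pos hb hμF) (mul_pos hF hEpos),
      mul_pos (mul_pos hb hK) (mul_pos hr hνE)]
  apply div_neg_of_neg_of_pos _ hden
  exact mul_neg_of_pos_of_neg hF hnum
end

section
/- Let b, K, r, νE, μE, μF, β, τ, γ > 0. The function Ms ↦ g(F, Ms) = rνE·K·b·τ·F²(1 − e^{−β(τF + γMs)}) / [bτF²(1 − e^{−β(τF+γMs)}) + K(νE+μE)(τF + γMs)] − μF·F is strictly decreasing in Ms on [0, ∞) for each fixed F > 0. -/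
lemma key18 (β : ℝ) (hβ : 0 < β) {s₁ s₂ : ℝ} (h1 : 0 < s₁) (h12 : s₁ < s₂) :
    s₁ * (1 - Real.exp (-(β * s₂))) < s₂ * (1 - Real.exp (-(β * s₁))) := by
  have hd : 0 < s₂ - s₁ := sub_pos.mpr h12
  set e1 := Real.exp (-(β * s₁)) with he1
  set ed := Real.exp (-(β * (s₂ - s₁))) with hed
  have hsplit : Real.exp (-(β * s₂)) = e1 * ed := by
    rw [he1, hed, ← Real.exp_add]; ring_nf
  have he1pos : 0 < e1 := Real.exp_pos _
  have hA : β * s₁ * e1 ≤ 1 - e1 := by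
    have := Real.add_one_le_exp (β * s₁)
    have hmul : (β * s₁ + 1) * e1 ≤ Real.exp (β * s₁) * e1 :=
      mul_le_mul_of_nonneg_right this he1pos.le
    have : Real.exp (β * s₁) * e1 = 1 := by
      rw [he1, ← Real.exp_add]; ring_nf; exact Real.exp_zero
    nlinarith
  have hB : 1 - ed < β * (s₂ - s₁) := by
    have hne : -(β * (s₂ - s₁)) ≠ 0 := by
      have : 0 < β * (s₂ - s₁) := by positivity
      intro h; nlinarith
    have := Real.add_one_lt_exp hne
    linarith
  rw [hsplit]
  nlinarith [mul_pos h1 he1pos, mul_le_mul_of_nonneg_left hA hd.le,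
    mul_lt_mul_of_pos_left hB (mul_pos h1 he1pos)]

theorem stmt18 (b K r νE μE μF β τ γ : ℝ)
    (hb : 0 < b) (hK : 0 < K) (hr : 0 < r) (hνE : 0 < νE) (hμE : 0 < μE)
    (hμF : 0 < μF) (hβ : 0 < β) (hτ : 0 < τ) (hγ : 0 < γ) :
    ∀ F : ℝ, 0 < F →
      StrictAntiOn (fun Ms : ℝ =>
        r * νE * K * b * τ * F ^ 2 * (1 - Real.exp (-(β * (τ * F + γ * Ms)))) /
          (b * τ * F ^ 2 * (1 - Real.exp (-(β * (τ * F + γ * Ms))))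
            + K * (νE + μE) * (τ * F + γ * Ms)) - μF * F)
        (Set.Ici 0) := by
  intro F hF M1 hM1 M2 hM2 hlt
  simp only [Set.mem_Ici] at hM1 hM2
  simp only
  set s₁ := τ * F + γ * M1 with hs1
  set s₂ := τ * F + γ * M2 with hs2
  have hs1pos : 0 < s₁ := by positivity
  have hs2pos : 0 < s₂ := by positivity
  have hs12 : s₁ < s₂ := by
    simp only [hs1, hs2]
    have := mul_lt_mul_of_pos_left hlt hγ
    linarith
  have hkey : s₁ * (1 - Real.exp (-(β * s₂))) < s₂ * (1 - Real.exp (-(β * s₁))) :=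
    key18 β hβ hs1pos hs12
  set E₁ := 1 - Real.exp (-(β * s₁)) with hE1
  set E₂ := 1 - Real.exp (-(β * s₂)) with hE2
  have hE1pos : 0 < E₁ := by
    have : Real.exp (-(β * s₁)) < 1 := by
      rw [Real.exp_lt_one_iff]; nlinarith
    linarith
  have hE2pos : 0 < E₂ := by
    have : Real.exp (-(β * s₂)) < 1 := by
      rw [Real.exp_lt_one_iff]; nlinarith
    linarith
  have hA : 0 < b * τ * F ^ 2 := by positivity
  have hB : 0 < K * (νE + μE) := by positivity
  have hden1 : 0 < b * τ * F ^ 2 * E₁ + K * (νE + μE) * s₁ := by positivity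
  have hden2 : 0 < b * τ * F ^ 2 * E₂ + K * (νE + μE) * s₂ := by positivity
  rw [sub_lt_sub_iff_right, div_lt_div_iff₀ hden2 hden1]
  have hC : 0 < r * νE * K := by positivity
  nlinarith [mul_pos hA hB, mul_pos (mul_pos hC hA) hB, mul_pos hC hA,
    mul_lt_mul_of_pos_left hkey (mul_pos (mul_pos hC hA) hB)]
end

section
/- Let a, c, d, β, τ > 0 with a > d and suppose F̄₁ < F̄₂ are two solutions in (0, a/c) of a − d − cF = (a − cF)e^{−βτF}. Then g1 − g2 (where g1(F) = a − d − cF, g2(F) = (a − cF)e^{−βτF}) is negative on (0, F̄₁), positive on (F̄₁, F̄₂), and negative on (F̄₂, ∞). -/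
theorem stmt19 (a c d β τ F₁ F₂ : ℝ) (ha : 0 < a) (hc : 0 < c) (hd : 0 < d)
    (hβ : 0 < β) (hτ : 0 < τ) (had : a > d)
    (g1 g2 : ℝ → ℝ)
    (hg1 : ∀ F, g1 F = a - d - c * F)
    (hg2 : ∀ F, g2 F = (a - c * F) * Real.exp (-(β * τ * F)))
    (hF₁ : 0 < F₁) (hF₁₂ : F₁ < F₂) (hF₂ : F₂ < a / c)
    (hroot₁ : g1 F₁ = g2 F₁) (hroot₂ : g1 F₂ = g2 F₂) :
    (∀ F ∈ Set.Ioo 0 F₁, g1 F - g2 F < 0) ∧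
    (∀ F ∈ Set.Ioo F₁ F₂, 0 < g1 F - g2 F) ∧
    (∀ F ∈ Set.Ioi F₂, g1 F - g2 F < 0) := by
  set s := β * τ with hs
  have hspos : 0 < s := mul_pos hβ hτ
  set H : ℝ → ℝ := fun F => a - d - c * F - (a - c * F) * Real.exp (-(s * F)) with hH
  have hHeq : ∀ F, g1 F - g2 F = H F := by
    intro F; rw [hg1, hg2, hH]
  set H' : ℝ → ℝ := fun F => -c + (c + s * (a - c * F)) * Real.exp (-(s * F)) with hH'
  have hderiv : ∀ x, HasDerivAt H (H' x) x := by
    intro x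
    have he : HasDerivAt (fun F => Real.exp (-(s * F))) (Real.exp (-(s * x)) * -(s * 1)) x :=
      (((hasDerivAt_id x).const_mul s).neg).exp
    have hlin : HasDerivAt (fun F => a - c * F) (0 - c * 1) x :=
      (hasDerivAt_const x a).sub ((hasDerivAt_id x).const_mul c)
    have hprod := hlin.mul he
    have hfull := (((hasDerivAt_const x (a - d)).sub ((hasDerivAt_id x).const_mul c)).sub hprod)
    exact hfull.congr_deriv (by simp only [hH']; ring)
  set H'' : ℝ → ℝ := fun F => -(s * Real.exp (-(s * F)) * (2 * c + s * (a - c * F))) with hH''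
  have hderiv2 : ∀ x, HasDerivAt H' (H'' x) x := by
    intro x
    have he : HasDerivAt (fun F => Real.exp (-(s * F))) (Real.exp (-(s * x)) * -(s * 1)) x :=
      (((hasDerivAt_id x).const_mul s).neg).exp
    have hlin : HasDerivAt (fun F => c + s * (a - c * F)) (0 + s * (0 - c * 1)) x :=
      (hasDerivAt_const x c).add (((hasDerivAt_const x a).sub
        ((hasDerivAt_id x).const_mul c)).const_mul s)
    have hfull := (hasDerivAt_const x (-c)).add (hlin.mul he)
    exact hfull.congr_deriv (by simp only [hH'']; ring)
  have hdH : deriv H = H' := funext fun x => (hderiv x).deriv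
  have hconc : StrictConcaveOn ℝ (Set.Icc 0 (a / c)) H := by
    apply strictConcaveOn_of_deriv2_neg (convex_Icc _ _)
    · apply Continuous.continuousOn
      have : Continuous (fun F : ℝ => Real.exp (-(s * F))) := by continuity
      continuity
    · intro x hx
      rw [interior_Icc, Set.mem_Ioo] at hx
      have hxa : c * x < a := by
        have := (lt_div_iff₀ hc).mp hx.2
        linarith
      simp only [Function.iterate_succ, Function.iterate_zero, Function.comp, id]
      rw [hdH, (hderiv2 x).deriv]
      show -(s * Real.exp (-(s * x)) * (2 * c + s * (a - c * x))) < 0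
      have hexp : 0 < Real.exp (-(s * x)) := Real.exp_pos _
      have h2 : 0 < 2 * c + s * (a - c * x) := by nlinarith
      have := mul_pos (mul_pos hspos hexp) h2
      linarith
  have hroot₁' : H F₁ = 0 := by
    have := hroot₁; rw [hg1, hg2] at this
    show a - d - c * F₁ - (a - c * F₁) * Real.exp (-(s * F₁)) = 0
    linarith
  have hroot₂' : H F₂ = 0 := by
    have := hroot₂; rw [hg1, hg2] at this
    show a - d - c * F₂ - (a - c * F₂) * Real.exp (-(s * F₂)) = 0
    linarith
  have hmem₁ : F₁ ∈ Set.Icc 0 (a / c) := ⟨le_of_lt hF₁, le_of_lt (lt_trans hF₁₂ hF₂)⟩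
  have hmem₂ : F₂ ∈ Set.Icc 0 (a / c) := ⟨le_of_lt (lt_trans hF₁ hF₁₂), le_of_lt hF₂⟩
  refine ⟨?_, ?_, ?_⟩
  · intro F hF
    obtain ⟨hF0, hFF₁⟩ := hF
    rw [hHeq]
    have hmemF : F ∈ Set.Icc 0 (a / c) :=
      ⟨le_of_lt hF0, le_of_lt (lt_trans (lt_trans hFF₁ hF₁₂) hF₂)⟩
    have hden : 0 < F₂ - F := by linarith
    set lam := (F₂ - F₁) / (F₂ - F) with hlam
    set mu := (F₁ - F) / (F₂ - F) with hmu
    have hlampos : 0 < lam := div_pos (by linarith) hden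
    have hmupos : 0 < mu := div_pos (by linarith) hden
    have hsum : lam + mu = 1 := by rw [hlam, hmu]; field_simp; ring
    have hcomb : lam * F + mu * F₂ = F₁ := by rw [hlam, hmu]; field_simp; ring
    have key := hconc.2 hmemF hmem₂ (by intro h; rw [h] at hFF₁; linarith) hlampos hmupos hsum
    rw [smul_eq_mul, smul_eq_mul, smul_eq_mul, smul_eq_mul, hcomb, hroot₁', hroot₂'] at key
    by_contra hpos
    push_neg at hpos
    have := mul_nonneg (le_of_lt hlampos) hpos
    linarith
  · intro F hF
    obtain ⟨hF1, hF2⟩ := hF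
    rw [hHeq]
    have hden : 0 < F₂ - F₁ := by linarith
    set lam := (F₂ - F) / (F₂ - F₁) with hlam
    set mu := (F - F₁) / (F₂ - F₁) with hmu
    have hlampos : 0 < lam := div_pos (by linarith) hden
    have hmupos : 0 < mu := div_pos (by linarith) hden
    have hsum : lam + mu = 1 := by rw [hlam, hmu]; field_simp; ring
    have hcomb : lam * F₁ + mu * F₂ = F := by rw [hlam, hmu]; field_simp; ring
    have key := hconc.2 hmem₁ hmem₂ (ne_of_lt hF₁₂) hlampos hmupos hsum
    rw [smul_eq_mul, smul_eq_mul, smul_eq_mul, smul_eq_mul, hcomb, hroot₁', hroot₂'] at key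
    linarith
  · intro F hF
    rw [Set.mem_Ioi] at hF
    rw [hHeq]
    by_cases hcase : F < a / c
    · have hmemF : F ∈ Set.Icc 0 (a / c) :=
        ⟨le_of_lt (lt_trans (lt_trans hF₁ hF₁₂) hF), le_of_lt hcase⟩
      have hden : 0 < F - F₁ := by linarith
      set lam := (F - F₂) / (F - F₁) with hlam
      set mu := (F₂ - F₁) / (F - F₁) with hmu
      have hlampos : 0 < lam := div_pos (by linarith) hden
      have hmupos : 0 < mu := div_pos (by linarith) hden
      have hsum : lam + mu = 1 := by rw [hlam, hmu]; field_simp; ring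
      have hcomb : lam * F₁ + mu * F = F₂ := by rw [hlam, hmu]; field_simp; ring
      have key := hconc.2 hmem₁ hmemF (ne_of_lt (by linarith)) hlampos hmupos hsum
      rw [smul_eq_mul, smul_eq_mul, smul_eq_mul, smul_eq_mul, hcomb, hroot₁', hroot₂'] at key
      by_contra hpos
      push_neg at hpos
      have := mul_nonneg (le_of_lt hmupos) hpos
      linarith
    · push_neg at hcase
      have hca : a ≤ c * F := by
        have := (div_le_iff₀ hc).mp hcase
        linarith
      have hF0 : 0 < F := lt_trans (lt_trans hF₁ hF₁₂) hF
      have hexp1 : Real.exp (-(s * F)) < 1 := Real.exp_lt_one_iff.mpr (by nlinarith)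
      have hexp0 : 0 < Real.exp (-(s * F)) := Real.exp_pos _
      show a - d - c * F - (a - c * F) * Real.exp (-(s * F)) < 0
      have key : 0 ≤ (c * F - a) * (1 - Real.exp (-(s * F))) :=
        mul_nonneg (by linarith) (by linarith)
      nlinarith [key]
end
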